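/- arXiv:1607.00419 — 2 statements merged into one kernel-verified Lean document; each statement's English description precedes it below -/
import Mathlib

section
/- Under the Volterra equation hypotheses and H*(n) → ∞, if t^x_n ∈ {0,…,n} is a time at which |x| attains its running maximum, i.e., |x(t^x_n)| = max_{0≤j≤n} |x(j)|, then lim_{n→∞} |x(t^x_n)| / |H(t^x_n)| = 1. -/
/-!
Sublinearity of `f` and summability of `k` give, for every `ε > 0`, a constant `C` with
`|x(n+1) - H(n+1)| ≤ ε · max_{j ≤ n} |x j| + C`. Hence `H* ≤ 2 max |x| + C`, so the running
maximum of `|x|` tends to infinity, and at the argmax times `t n` the error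
`|x(t n) - H(t n)|` is `o(|x(t n)|)`: `x ∘ t` and `H ∘ t` are asymptotically equivalent.
-/

open Filter Finset Topology

/-- Running maximum of `g` over `{1,…,n}` (value `0` when `n = 0`). -/
noncomputable def runMax1 (g : ℕ → ℝ) (n : ℕ) : ℝ :=
  if h : 1 ≤ n then (Finset.Icc 1 n).sup' (Finset.nonempty_Icc.mpr h) g else 0

/-- Running maximum of `g` over `{0,…,n}`. -/
noncomputable def runMax0 (g : ℕ → ℝ) (n : ℕ) : ℝ :=
  (Finset.Icc 0 n).sup' (Finset.nonempty_Icc.mpr (Nat.zero_le n)) g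

open Asymptotics

section RunningMax

variable (g : ℕ → ℝ)

lemma le_runMax0 {j n : ℕ} (h : j ≤ n) : g j ≤ runMax0 g n :=
  le_sup' g (mem_Icc.mpr ⟨Nat.zero_le _, h⟩)

lemma runMax0_mono : Monotone (runMax0 g) := fun _ _ hmn =>
  sup'_le _ _ fun _ hj => le_runMax0 g ((mem_Icc.mp hj).2.trans hmn)

lemma runMax1_le {n : ℕ} (hn : 1 ≤ n) {b : ℝ} (h : ∀ j, 1 ≤ j → j ≤ n → g j ≤ b) :
    runMax1 g n ≤ b := by
  rw [runMax1, dif_pos hn]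
  exact sup'_le _ _ fun j hj => h j (mem_Icc.mp hj).1 (mem_Icc.mp hj).2

end RunningMax

lemma exists_abs_le_mul_abs_add_of_tendsto_div_cocompact {f : ℝ → ℝ} (hf : Continuous f)
    (hsub : Tendsto (fun y => f y / y) (cocompact ℝ) (𝓝 0)) {ε : ℝ} (hε : 0 < ε) :
    ∃ C, ∀ y, |f y| ≤ ε * |y| + C := by
  obtain ⟨s, hs, hsε⟩ := mem_cocompact.mp (Metric.tendsto_nhds.mp hsub ε hε)
  obtain ⟨C, hC⟩ := (hs.insert 0).exists_bound_of_continuousOn hf.continuousOn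
  refine ⟨C, fun y => ?_⟩
  by_cases hy : y ∈ insert 0 s
  · have := hC y hy
    rw [Real.norm_eq_abs] at this
    nlinarith [abs_nonneg y]
  · obtain ⟨hy0, hys⟩ : y ≠ 0 ∧ y ∉ s := by simpa using hy
    have hlt : |f y| / |y| < ε := by simpa [Real.dist_eq] using hsε hys
    have hC0 : 0 ≤ C := (norm_nonneg _).trans (hC 0 (Set.mem_insert _ _))
    rw [div_lt_iff₀ (abs_pos.mpr hy0)] at hlt
    linarith

lemma abs_sum_range_mul_le_tsum_mul {k g : ℕ → ℝ} (hk : Summable fun j => |k j|) (n : ℕ)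
    {B : ℝ} (hg : ∀ j ≤ n, |g j| ≤ B) :
    |∑ j ∈ range (n + 1), k (n - j) * g j| ≤ (∑' j, |k j|) * B := by
  have hB : 0 ≤ B := (abs_nonneg _).trans (hg 0 (Nat.zero_le n))
  calc |∑ j ∈ range (n + 1), k (n - j) * g j|
      ≤ ∑ j ∈ range (n + 1), |k (n - j)| * B := by
        refine (abs_sum_le_sum_abs _ _).trans (sum_le_sum fun j hj => ?_)
        rw [abs_mul]
        exact mul_le_mul_of_nonneg_left (hg j (Nat.lt_succ_iff.mp (mem_range.mp hj)))
          (abs_nonneg _)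
    _ = (∑ j ∈ range (n + 1), |k j|) * B := by
        rw [← sum_mul, ← sum_range_reflect (fun j => |k j|) (n + 1)]
        simp
    _ ≤ (∑' j, |k j|) * B :=
        mul_le_mul_of_nonneg_right (hk.sum_le_tsum _ fun _ _ => abs_nonneg _) hB

lemma volterra_abs_sub_le {f : ℝ → ℝ} {k H x : ℕ → ℝ} (hf : Continuous f)
    (hsub : Tendsto (fun y => f y / y) (cocompact ℝ) (𝓝 0)) (hk : Summable fun j => |k j|)
    (hx : ∀ n, x (n + 1) = H (n + 1) + ∑ j ∈ range (n + 1), k (n - j) * f (x j))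
    {ε : ℝ} (hε : 0 < ε) :
    ∃ C, ∀ n, |x (n + 1) - H (n + 1)| ≤ ε * runMax0 (fun j => |x j|) n + C := by
  set K := ∑' j, |k j|
  have hK : 0 ≤ K := tsum_nonneg fun _ => abs_nonneg _
  obtain ⟨C, hC⟩ :=
    exists_abs_le_mul_abs_add_of_tendsto_div_cocompact hf hsub (div_pos hε (by linarith : 0 < K + 1))
  refine ⟨K * C, fun n => ?_⟩
  set X := runMax0 (fun j => |x j|) n
  have hX : 0 ≤ X := (abs_nonneg _).trans (le_runMax0 (fun j => |x j|) (Nat.zero_le n))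
  have hKε : K * (ε / (K + 1)) ≤ ε := by
    rw [mul_div_assoc', div_le_iff₀ (by linarith)]
    nlinarith
  calc |x (n + 1) - H (n + 1)|
      ≤ K * (ε / (K + 1) * X + C) := by
        rw [hx n, add_sub_cancel_left]
        refine abs_sum_range_mul_le_tsum_mul hk n fun j hj => (hC _).trans ?_
        gcongr
        exact le_runMax0 (fun j => |x j|) hj
    _ ≤ ε * X + K * C := by nlinarith

section ErrorBound

variable {x H : ℕ → ℝ}
  (herr : ∀ ε > 0, ∃ C, ∀ n, |x (n + 1) - H (n + 1)| ≤ ε * runMax0 (fun j => |x j|) n + C)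
include herr

lemma tendsto_runMax0_atTop
    (hH : Tendsto (runMax1 fun j => |H j|) atTop atTop) :
    Tendsto (runMax0 fun j => |x j|) atTop atTop := by
  obtain ⟨C, hC⟩ := herr 1 one_pos
  refine tendsto_atTop_mono' _ ?_
    ((tendsto_atTop_add_const_right _ (-C) hH).atTop_div_const two_pos)
  filter_upwards [eventually_ge_atTop 1] with n hn
  suffices runMax1 (fun j => |H j|) n ≤ 2 * runMax0 (fun j => |x j|) n + C by linarith
  refine runMax1_le _ hn fun j hj1 hjn => ?_
  obtain ⟨m, rfl⟩ := Nat.exists_eq_add_of_le' hj1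
  have hxj := le_runMax0 (fun j => |x j|) hjn
  have hxm := runMax0_mono (fun j => |x j|) (show m ≤ n by omega)
  have := abs_sub_abs_le_abs_sub (H (m + 1)) (x (m + 1))
  rw [abs_sub_comm] at this
  linarith [hC m]

variable {t : ℕ → ℕ} (ht : ∀ n, t n ≤ n ∧ |x (t n)| = runMax0 (fun j => |x j|) n)
include ht

lemma isEquivalent_comp_of_abs_eq_runMax0 (hX : Tendsto (runMax0 fun j => |x j|) atTop atTop) :
    (fun n => H (t n)) ~[atTop] fun n => x (t n) := by
  have ht1 : ∀ᶠ n in atTop, 1 ≤ t n := by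
    filter_upwards [hX.eventually_gt_atTop |x 0|] with n hn
    by_contra! h0
    rw [← (ht n).2, Nat.lt_one_iff.mp h0] at hn
    exact lt_irrefl _ hn
  refine isLittleO_iff.mpr fun c hc => ?_
  obtain ⟨C, hC⟩ := herr (c / 2) (half_pos hc)
  filter_upwards [ht1, hX.eventually_ge_atTop (2 * C / c)] with n hn hXn
  obtain ⟨m, hm⟩ := Nat.exists_eq_add_of_le' hn
  have hXm := runMax0_mono (fun j => |x j|) (show m ≤ n by have := (ht n).1; omega)
  have hCX : C ≤ c / 2 * runMax0 (fun j => |x j|) n := by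
    rw [div_le_iff₀' hc] at hXn
    linarith
  simp only [Pi.sub_apply, Real.norm_eq_abs, (ht n).2]
  rw [abs_sub_comm, hm]
  nlinarith [hC m]

end ErrorBound

theorem stmt5_general
(f : ℝ → ℝ) (k H x : ℕ → ℝ)
    (hf : Continuous f)
    (hsub : Filter.Tendsto (fun y => f y / y) (Filter.cocompact ℝ) (nhds 0))
    (hk : Summable (fun j => |k j|))
    (hx : ∀ n : ℕ, x (n + 1) = H (n + 1) + ∑ j ∈ Finset.range (n + 1), k (n - j) * f (x j))
    (hH : Filter.Tendsto (fun n => runMax1 (fun j => |H j|) n) Filter.atTop Filter.atTop)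
    (t : ℕ → ℕ)
    (ht : ∀ n : ℕ, t n ≤ n ∧ |x (t n)| = runMax0 (fun j => |x j|) n) :
    Filter.Tendsto (fun n => |x (t n)| / |H (t n)|) Filter.atTop (nhds 1) := by
  have herr := fun ε (hε : 0 < ε) => volterra_abs_sub_le hf hsub hk hx hε
  have hX := tendsto_runMax0_atTop herr hH
  have hxt : ∀ᶠ n in atTop, x (t n) ≠ 0 := by
    filter_upwards [hX.eventually_gt_atTop 0] with n hn
    rw [← abs_pos, (ht n).2]
    exact hn
  have hlim := (isEquivalent_iff_tendsto_one hxt).mp (isEquivalent_comp_of_abs_eq_runMax0 herr ht hX)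
  simpa [abs_div] using (hlim.inv₀ one_ne_zero).abs

theorem stmt5
(f : ℝ → ℝ) (k H x : ℕ → ℝ) (ξ : ℝ)
    (hf : Continuous f)
    (hsub : Filter.Tendsto (fun y => f y / y) (Filter.cocompact ℝ) (nhds 0))
    (hk : Summable (fun j => |k j|))
    (hx0 : x 0 = ξ)
    (hx : ∀ n : ℕ, x (n + 1) = H (n + 1) + ∑ j ∈ Finset.range (n + 1), k (n - j) * f (x j))
    (hH : Filter.Tendsto (fun n => runMax1 (fun j => |H j|) n) Filter.atTop Filter.atTop)
    (t : ℕ → ℕ)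
    (ht : ∀ n : ℕ, t n ≤ n ∧ |x (t n)| = runMax0 (fun j => |x j|) n) :
    Filter.Tendsto (fun n => |x (t n)| / |H (t n)|) Filter.atTop (nhds 1) :=
  stmt5_general f k H x hf hsub hk hx hH t ht
end

section
/- Under the Volterra equation hypotheses, let φ : [0,∞) → [0,∞) be increasing and convex. If there exists η > 0 such that limsup_{n→∞} (1/n) ∑_{j=1}^{n} φ((1+η)|H(j)|) < ∞, then limsup_{n→∞} (1/n) ∑_{j=0}^{n} φ(|x(j)|) < ∞. -/
/-!
Since `f` is sublinear, `|x (n+1)| ≤ |H (n+1)| + ε ∑ⱼ |k (n-j)| |x j| + C` for any `ε > 0`.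
With `q = η / (2(1+η))` and `ε = q / κ`, `κ ≥ ‖k‖₁`, the right side is the convex combination
`(1+η)⁻¹ ((1+η) |H (n+1)|) + q u + q K` of three nonnegative numbers, where `u` is the
`|k|/κ`-weighted average of the `|x j|`. Monotonicity and convexity of `φ` together with Jensen
give `φ |x (n+1)| ≤ φ ((1+η) |H (n+1)|) + q ∑ⱼ (|k (n-j)| / κ) φ |x j| + const`. Summing over `n`
and exchanging the order of summation, the convolution term is at most `q` times the partial sum
of `φ |x j|` itself, and since `q < 1` it is absorbed into the left side.
-/

open Filter Finset Topology

theorem exists_abs_le_mul_abs_add_of_tendsto_div {f : ℝ → ℝ} (hf : Continuous f)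
    (hsub : Tendsto (fun y => f y / y) (cocompact ℝ) (𝓝 0)) {ε : ℝ} (hε : 0 < ε) :
    ∃ C, 0 ≤ C ∧ ∀ y, |f y| ≤ ε * |y| + C := by
  have hfar : ∀ᶠ y in cocompact ℝ, |f y| ≤ ε * |y| := by
    filter_upwards [hsub.eventually (eventually_abs_sub_lt 0 hε),
      (isCompact_singleton (x := (0 : ℝ))).compl_mem_cocompact] with y hy hy0
    rw [sub_zero, abs_div, div_lt_iff₀ (abs_pos.mpr hy0)] at hy
    exact hy.le
  obtain ⟨K, hK, hKfar⟩ := mem_cocompact.mp hfar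
  obtain ⟨C, hC⟩ := hK.exists_bound_of_continuousOn hf.continuousOn
  refine ⟨max C 0, le_max_right _ _, fun y => ?_⟩
  by_cases hy : y ∈ K
  · have := (hC y hy).trans (le_max_left C 0)
    rw [Real.norm_eq_abs] at this
    nlinarith [abs_nonneg y]
  · exact (hKfar hy).trans (le_add_of_nonneg_right (le_max_right C 0))

theorem ConvexOn.map_sum_le_of_sum_le_one {ι E : Type*} [AddCommGroup E] [Module ℝ E]
    {s : Set E} {φ : E → ℝ} (hφ : ConvexOn ℝ s φ) (h0 : (0 : E) ∈ s) {t : Finset ι}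
    {w : ι → ℝ} {z : ι → E} (hw : ∀ i ∈ t, 0 ≤ w i) (hw1 : ∑ i ∈ t, w i ≤ 1)
    (hz : ∀ i ∈ t, z i ∈ s) :
    φ (∑ i ∈ t, w i • z i) ≤ ∑ i ∈ t, w i • φ (z i) + (1 - ∑ i ∈ t, w i) • φ 0 := by
  -- Jensen for the weights `w` completed by the weight `1 - ∑ w` at the point `0`
  have := hφ.map_sum_le (t := t.insertNone) (w := fun o => o.elim (1 - ∑ i ∈ t, w i) w)
    (p := fun o => o.elim 0 z) ?_ ?_ ?_
  · simpa [add_comm] using this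
  · rintro (_ | i) hi
    · simpa using hw1
    · exact hw i (by simpa using hi)
  · simp
  · rintro (_ | i) hi
    · exact h0
    · exact hz i (by simpa using hi)

theorem ConvexOn.map_le_of_le_three_point {φ : ℝ → ℝ} (hmono : MonotoneOn φ (Set.Ici 0))
    (hconv : ConvexOn ℝ (Set.Ici 0) φ) {p q h u v y : ℝ} (hp : 0 ≤ p) (hq : 0 ≤ q)
    (hpq : p + 2 * q = 1) (hh : 0 ≤ h) (hu : 0 ≤ u) (hv : 0 ≤ v) (hy : 0 ≤ y)
    (hle : y ≤ p * h + q * (u + v)) : φ y ≤ p * φ h + q * (φ u + φ v) := by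
  have huv : φ ((1 / 2) * u + (1 / 2) * v) ≤ (1 / 2) * φ u + (1 / 2) * φ v :=
    hconv.2 hu hv (by norm_num) (by norm_num) (by norm_num)
  have hmid : φ (p * h + 2 * q * ((1 / 2) * u + (1 / 2) * v))
      ≤ p * φ h + 2 * q * φ ((1 / 2) * u + (1 / 2) * v) :=
    hconv.2 hh (by simp only [Set.mem_Ici]; positivity) hp (by positivity) hpq
  calc φ y ≤ φ (p * h + 2 * q * ((1 / 2) * u + (1 / 2) * v)) :=
        hmono hy (by simp only [Set.mem_Ici]; positivity) (by linarith)
    _ ≤ p * φ h + q * (φ u + φ v) := by nlinarith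

theorem Finset.sum_range_conv_le_mul_sum {a g : ℕ → ℝ} {A : ℝ}
    (hA : ∀ m, ∑ i ∈ range m, a i ≤ A) (hg : ∀ j, 0 ≤ g j) (N : ℕ) :
    ∑ n ∈ range N, ∑ j ∈ range (n + 1), a (n - j) * g j ≤ A * ∑ j ∈ range N, g j := by
  simp only [range_eq_Ico]
  rw [← sum_Ico_Ico_comm, mul_sum]
  refine sum_le_sum fun j hj => ?_
  rw [← sum_mul, sum_Ico_eq_sum_range]
  simp only [Nat.add_sub_cancel_left]
  exact mul_le_mul_of_nonneg_right (hA _) (hg j)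

theorem EReal.limsup_coe_lt_top_iff {α : Type*} {l : Filter α} {u : α → ℝ} :
    limsup (fun n => (u n : EReal)) l < ⊤ ↔ ∃ b : ℝ, ∀ᶠ n in l, u n ≤ b := by
  constructor
  · intro h
    obtain ⟨b, hb, -⟩ := EReal.lt_iff_exists_real_btwn.mp h
    exact ⟨b, (eventually_lt_of_limsup_lt hb).mono fun n hn => EReal.coe_le_coe_iff.mp hn.le⟩
  · rintro ⟨b, hb⟩
    exact (limsup_le_of_le (by isBoundedDefault)
      (hb.mono fun n hn => EReal.coe_le_coe_iff.mpr hn)).trans_lt (EReal.coe_lt_top b)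

theorem sum_range_succ_le_of_le_add_conv {g a w : ℕ → ℝ} {q D : ℝ} (hg : ∀ n, 0 ≤ g n)
    (hq : 0 ≤ q) (hw : ∀ m, ∑ i ∈ range m, w i ≤ 1)
    (hrec : ∀ n, g (n + 1) ≤ a (n + 1) + q * ∑ j ∈ range (n + 1), w (n - j) * g j + D)
    (N : ℕ) : (1 - q) * ∑ j ∈ range (N + 1), g j ≤ g 0 + ∑ j ∈ Icc 1 N, a j + N * D := by
  have hsum : ∑ n ∈ range N, g (n + 1) ≤ ∑ n ∈ range N, a (n + 1)
      + q * ∑ n ∈ range N, ∑ j ∈ range (n + 1), w (n - j) * g j + N * D := by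
    calc ∑ n ∈ range N, g (n + 1)
        ≤ ∑ n ∈ range N, (a (n + 1) + q * ∑ j ∈ range (n + 1), w (n - j) * g j + D) :=
          sum_le_sum fun n _ => hrec n
      _ = _ := by simp only [sum_add_distrib, ← mul_sum, sum_const, card_range, nsmul_eq_mul]
  have hswap := mul_le_mul_of_nonneg_left (sum_range_conv_le_mul_sum hw hg N) hq
  have hIcc : ∑ j ∈ Icc 1 N, a j = ∑ n ∈ range N, a (n + 1) := by
    rw [← Ico_add_one_right_eq_Icc, sum_Ico_eq_sum_range]
    simp [add_comm]
  have hlast : q * ∑ j ∈ range N, g j ≤ q * ∑ j ∈ range (N + 1), g j :=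
    mul_le_mul_of_nonneg_left (sum_le_sum_of_subset_of_nonneg (range_subset_range.mpr N.le_succ)
      fun j _ _ => hg j) hq
  rw [sum_range_succ'] at hlast ⊢
  linarith

theorem limsup_avg_lt_top_of_mul_le {S T : ℕ → ℝ} {q A D : ℝ} (hq : q < 1) (hA : 0 ≤ A)
    (hST : ∀ N : ℕ, (1 - q) * S N ≤ A + T N + N * D)
    (hT : limsup (fun n : ℕ => ((1 / (n : ℝ) * T n : ℝ) : EReal)) atTop < ⊤) :
    limsup (fun n : ℕ => ((1 / (n : ℝ) * S n : ℝ) : EReal)) atTop < ⊤ := by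
  rw [EReal.limsup_coe_lt_top_iff] at hT ⊢
  obtain ⟨b, hb⟩ := hT
  refine ⟨(A + b + D) / (1 - q), ?_⟩
  filter_upwards [hb, eventually_ge_atTop 1] with n hbn hn
  have hn : (1 : ℝ) ≤ n := by exact_mod_cast hn
  rw [le_div_iff₀ (by linarith)]
  calc 1 / (n : ℝ) * S n * (1 - q) = 1 / n * ((1 - q) * S n) := by ring
    _ ≤ 1 / n * (A + T n + n * D) := by gcongr; exact hST n
    _ = A / n + 1 / n * T n + D := by field_simp
    _ ≤ A + b + D := by gcongr; exact div_le_self hA hn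

section Volterra

variable {f : ℝ → ℝ} {k H x : ℕ → ℝ}

theorem abs_volterra_succ_le
    (hx : ∀ n : ℕ, x (n + 1) = H (n + 1) + ∑ j ∈ range (n + 1), k (n - j) * f (x j))
    {ε C : ℝ} (hfC : ∀ y, |f y| ≤ ε * |y| + C) (n : ℕ) :
    |x (n + 1)| ≤ |H (n + 1)| + ∑ j ∈ range (n + 1), |k (n - j)| * (ε * |x j| + C) := by
  rw [hx n]
  calc |H (n + 1) + ∑ j ∈ range (n + 1), k (n - j) * f (x j)|
      ≤ |H (n + 1)| + ∑ j ∈ range (n + 1), |k (n - j) * f (x j)| :=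
        (abs_add_le _ _).trans (add_le_add_right (abs_sum_le_sum_abs _ _) _)
    _ ≤ _ := by
        gcongr with j
        rw [abs_mul]
        exact mul_le_mul_of_nonneg_left (hfC _) (abs_nonneg _)

theorem map_abs_volterra_succ_le {φ : ℝ → ℝ} (hmono : MonotoneOn φ (Set.Ici 0))
    (hconv : ConvexOn ℝ (Set.Ici 0) φ) (hφnn : ∀ y, 0 ≤ y → 0 ≤ φ y)
    (hx : ∀ n : ℕ, x (n + 1) = H (n + 1) + ∑ j ∈ range (n + 1), k (n - j) * f (x j))
    {η κ C : ℝ} (hη : 0 < η) (hκ : 0 < κ) (hC : 0 ≤ C) (hkκ : ∀ m, ∑ i ∈ range m, |k i| ≤ κ)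
    (hfC : ∀ y, |f y| ≤ η / (2 * (1 + η)) / κ * |y| + C) (n : ℕ) :
    φ |x (n + 1)| ≤ φ ((1 + η) * |H (n + 1)|)
      + η / (2 * (1 + η)) * ∑ j ∈ range (n + 1), |k (n - j)| / κ * φ |x j|
      + η / (2 * (1 + η)) * (φ 0 + φ (C * κ / (η / (2 * (1 + η))))) := by
  set q := η / (2 * (1 + η))
  have hq : 0 < q := by positivity
  set u := ∑ j ∈ range (n + 1), |k (n - j)| / κ * |x j|
  have hkrev : ∑ j ∈ range (n + 1), |k (n - j)| ≤ κ := by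
    have h := sum_range_reflect (fun i => |k i|) (n + 1)
    simp only [Nat.add_sub_cancel] at h
    exact h ▸ hkκ _
  have hw1 : ∑ j ∈ range (n + 1), |k (n - j)| / κ ≤ 1 := by
    rwa [← sum_div, div_le_one hκ]
  have hlin : |x (n + 1)| ≤ 1 / (1 + η) * ((1 + η) * |H (n + 1)|) + q * (u + C * κ / q) := by
    have hsplit : ∑ j ∈ range (n + 1), |k (n - j)| * (q / κ * |x j| + C)
        = q * u + C * ∑ j ∈ range (n + 1), |k (n - j)| := by
      simp only [u, mul_sum, ← sum_add_distrib]
      exact sum_congr rfl fun j _ => by ring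
    have hrhs : 1 / (1 + η) * ((1 + η) * |H (n + 1)|) + q * (u + C * κ / q)
        = |H (n + 1)| + q * u + C * κ := by
      field_simp
      ring
    linarith [abs_volterra_succ_le hx hfC n, mul_le_mul_of_nonneg_left hkrev hC]
  have hjensen : φ u ≤ ∑ j ∈ range (n + 1), |k (n - j)| / κ * φ |x j| + φ 0 := by
    have := hconv.map_sum_le_of_sum_le_one (Set.mem_Ici.mpr le_rfl)
      (fun j _ => by positivity) hw1 (fun j _ => Set.mem_Ici.mpr (abs_nonneg (x j)))
    simp only [smul_eq_mul] at this
    nlinarith [hφnn 0 le_rfl, sum_nonneg fun j (_ : j ∈ range (n + 1)) =>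
      div_nonneg (abs_nonneg (k (n - j))) hκ.le]
  have hthree := hconv.map_le_of_le_three_point hmono (p := 1 / (1 + η)) (by positivity)
    hq.le (by simp only [q]; field_simp) (by positivity) (by positivity) (by positivity)
    (abs_nonneg _) hlin
  have hp : 1 / (1 + η) * φ ((1 + η) * |H (n + 1)|) ≤ φ ((1 + η) * |H (n + 1)|) :=
    mul_le_of_le_one_left (hφnn _ (by positivity)) (by rw [div_le_one (by linarith)]; linarith)
  linarith [mul_le_mul_of_nonneg_left hjensen hq.le]

end Volterra

theorem stmt19_general
(f : ℝ → ℝ) (k H x : ℕ → ℝ)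
    (hf : Continuous f)
    (hsub : Filter.Tendsto (fun y => f y / y) (Filter.cocompact ℝ) (nhds 0))
    (hk : Summable (fun j => |k j|))
    (hx : ∀ n : ℕ, x (n + 1) = H (n + 1) + ∑ j ∈ Finset.range (n + 1), k (n - j) * f (x j))
    (φ : ℝ → ℝ)
    (hφmono : MonotoneOn φ (Set.Ici (0 : ℝ)))
    (hφconv : ConvexOn ℝ (Set.Ici (0 : ℝ)) φ)
    (hφnn : ∀ y : ℝ, 0 ≤ y → 0 ≤ φ y)
    (hH : ∃ η : ℝ, 0 < η ∧
      Filter.limsup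
        (fun n : ℕ => ((1 / (n : ℝ) * ∑ j ∈ Finset.Icc 1 n, φ ((1 + η) * |H j|) : ℝ) : EReal))
        Filter.atTop < ⊤) :
    Filter.limsup
      (fun n : ℕ => ((1 / (n : ℝ) * ∑ j ∈ Finset.range (n + 1), φ (|x j|) : ℝ) : EReal))
      Filter.atTop < ⊤ := by
  obtain ⟨η, hη, hHavg⟩ := hH
  set κ := ∑' j, |k j| + 1
  have hκ : 0 < κ := by positivity
  have hkκ : ∀ m, ∑ i ∈ range m, |k i| ≤ κ := fun m =>
    (hk.sum_le_tsum _ fun i _ => abs_nonneg _).trans (le_add_of_nonneg_right zero_le_one)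
  have hq : 0 < η / (2 * (1 + η)) := by positivity
  obtain ⟨C, hC, hfC⟩ := exists_abs_le_mul_abs_add_of_tendsto_div hf hsub (div_pos hq hκ)
  have hrec := map_abs_volterra_succ_le hφmono hφconv hφnn hx hη hκ hC hkκ hfC
  have hsum := sum_range_succ_le_of_le_add_conv (fun n => hφnn _ (abs_nonneg (x n))) hq.le
    (a := fun j => φ ((1 + η) * |H j|)) (w := fun i => |k i| / κ)
    (fun m => by rw [← sum_div, div_le_one hκ]; exact hkκ m) hrec
  exact limsup_avg_lt_top_of_mul_le (by rw [div_lt_one (by positivity)]; linarith)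
    (hφnn _ (abs_nonneg _)) hsum hHavg

theorem stmt19
(f : ℝ → ℝ) (k H x : ℕ → ℝ) (ξ : ℝ)
    (hf : Continuous f)
    (hsub : Filter.Tendsto (fun y => f y / y) (Filter.cocompact ℝ) (nhds 0))
    (hk : Summable (fun j => |k j|))
    (hx0 : x 0 = ξ)
    (hx : ∀ n : ℕ, x (n + 1) = H (n + 1) + ∑ j ∈ Finset.range (n + 1), k (n - j) * f (x j))
    (hkpos : 0 < ∑' j, |k j|)
    (φ : ℝ → ℝ)
    (hφmono : MonotoneOn φ (Set.Ici (0 : ℝ)))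
    (hφconv : ConvexOn ℝ (Set.Ici (0 : ℝ)) φ)
    (hφnn : ∀ y : ℝ, 0 ≤ y → 0 ≤ φ y)
    (hH : ∃ η : ℝ, 0 < η ∧
      Filter.limsup
        (fun n : ℕ => ((1 / (n : ℝ) * ∑ j ∈ Finset.Icc 1 n, φ ((1 + η) * |H j|) : ℝ) : EReal))
        Filter.atTop < ⊤) :
    Filter.limsup
      (fun n : ℕ => ((1 / (n : ℝ) * ∑ j ∈ Finset.range (n + 1), φ (|x j|) : ℝ) : EReal))
      Filter.atTop < ⊤ :=
  stmt19_general f k H x hf hsub hk hx φ hφmono hφconv hφnn hH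
end
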